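/- Let G: m → n = A ∘ B with A: k → n and B: m → k place graphs. Then the entity set V_G is partitioned as V_A ⊎ V_B, and for every entity v ∈ V_G exactly one of the following holds: (i) v ∈ V_A and all ancestors of v in G lie in V_A; (ii) v ∈ V_B. Consequently, the set V_A is upward-closed and V_B is downward-closed under the ancestry (transitive parent) relation restricted to entities. -/

import Mathlib

/-!
An entity of `A` that is not in `B` keeps its `A`-parent in `A ∘ B`, and by well-formedness that
parent is an entity of `A`. Hence a child of a `B`-entity lies in `B`, so `V_B` is closed under
descendants, and its complement `V_A` in the disjoint union is closed under ancestors.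
-/

/-- A concrete place graph `B : m → n` with entity set `V`, `m` sites, `n` regions,
a parent map on entities (`prntE`) and on sites (`prntS`). -/
structure PlaceGraph (α : Type) where
  V : Finset α
  m : ℕ
  n : ℕ
  prntE : α → α ⊕ ℕ
  prntS : ℕ → α ⊕ ℕ

namespace PlaceGraph

/-- Well-formedness: parents of entities/sites are entities of the graph or regions `< n`. -/
def WF {α : Type} (G : PlaceGraph α) : Prop :=
  (∀ v ∈ G.V, (∀ u, G.prntE v = .inl u → u ∈ G.V) ∧ (∀ j, G.prntE v = .inr j → j < G.n)) ∧
  (∀ s, s < G.m → (∀ u, G.prntS s = .inl u → u ∈ G.V) ∧ (∀ j, G.prntS s = .inr j → j < G.n))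

/-- Composition `A ∘ B` of place graphs `A : k → n` and `B : m → k`:
`B`'s regions are identified with `A`'s sites. -/
def comp {α : Type} [DecidableEq α] (A B : PlaceGraph α) : PlaceGraph α where
  V := A.V ∪ B.V
  m := B.m
  n := A.n
  prntE := fun v =>
    if v ∈ B.V then
      match B.prntE v with
      | .inl u => .inl u
      | .inr j => A.prntS j
    else A.prntE v
  prntS := fun s =>
    match B.prntS s with
    | .inl u => .inl u
    | .inr j => A.prntS j

/-- `step G v u`: the entity `u` is the parent of the entity `v` in `G`. -/
def step {α : Type} (G : PlaceGraph α) (v u : α) : Prop :=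
  v ∈ G.V ∧ u ∈ G.V ∧ G.prntE v = .inl u

/-- `Anc G u v`: the entity `u` is a (strict) ancestor of the entity `v` in `G`,
i.e. `u ∈ prnt_G⁺(v)`. -/
def Anc {α : Type} (G : PlaceGraph α) (u v : α) : Prop :=
  Relation.TransGen (step G) v u

end PlaceGraph

namespace PlaceGraph

variable {α : Type} [DecidableEq α] {A B : PlaceGraph α}

theorem comp_prntE_of_notMem {v : α} (hv : v ∉ B.V) : (A.comp B).prntE v = A.prntE v :=
  if_neg hv

theorem mem_right_of_step_comp (hWA : A.WF) (hdisj : Disjoint A.V B.V) {v u : α}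
    (h : (A.comp B).step v u) (hu : u ∈ B.V) : v ∈ B.V := by
  obtain ⟨hv, -, hvu⟩ := h
  by_contra hvB
  have hvA : v ∈ A.V := (Finset.mem_union.mp hv).resolve_right hvB
  rw [comp_prntE_of_notMem hvB] at hvu
  exact Finset.disjoint_left.mp hdisj ((hWA.1 v hvA).1 u hvu) hu

theorem mem_right_of_anc_comp (hWA : A.WF) (hdisj : Disjoint A.V B.V) {v w : α}
    (h : (A.comp B).Anc v w) (hv : v ∈ B.V) : w ∈ B.V :=
  Relation.TransGen.closed' (r := (A.comp B).step) (mem_right_of_step_comp hWA hdisj) h hv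

theorem mem_left_of_anc_comp (hWA : A.WF) (hdisj : Disjoint A.V B.V) {v w : α}
    (hw : w ∈ (A.comp B).V) (h : (A.comp B).Anc w v) (hv : v ∈ A.V) : w ∈ A.V :=
  (Finset.mem_union.mp hw).resolve_right fun hwB =>
    Finset.disjoint_left.mp hdisj hv (mem_right_of_anc_comp hWA hdisj h hwB)

end PlaceGraph

theorem comp_partition_up_down_closed_general {α : Type} [DecidableEq α]
    (A B : PlaceGraph α) (hWA : A.WF)
    (hdisj : Disjoint A.V B.V) :
    ((A.comp B).V = A.V ∪ B.V ∧ Disjoint A.V B.V) ∧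
    (∀ v ∈ (A.comp B).V,
      Xor' (v ∈ A.V ∧ ∀ w ∈ (A.comp B).V, PlaceGraph.Anc (A.comp B) w v → w ∈ A.V)
           (v ∈ B.V)) ∧
    (∀ v ∈ A.V, ∀ w ∈ (A.comp B).V, PlaceGraph.Anc (A.comp B) w v → w ∈ A.V) ∧
    (∀ v ∈ B.V, ∀ w ∈ (A.comp B).V, PlaceGraph.Anc (A.comp B) v w → w ∈ B.V) := by
  have up : ∀ v ∈ A.V, ∀ w ∈ (A.comp B).V, PlaceGraph.Anc (A.comp B) w v → w ∈ A.V :=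
    fun v hv w hw h => PlaceGraph.mem_left_of_anc_comp hWA hdisj hw h hv
  refine ⟨⟨rfl, hdisj⟩, fun v hv => ?_, up,
    fun v hv w _ h => PlaceGraph.mem_right_of_anc_comp hWA hdisj h hv⟩
  rcases Finset.mem_union.mp hv with hvA | hvB
  · exact Or.inl ⟨⟨hvA, up v hvA⟩, Finset.disjoint_left.mp hdisj hvA⟩
  · exact Or.inr ⟨hvB, fun hA => Finset.disjoint_left.mp hdisj hA.1 hvB⟩

/-- In `G = A ∘ B`, the entity set `V_G` is partitioned as `V_A ⊎ V_B`,
and every entity satisfies exactly one of: (i) it is in `V_A` and all its ancestors lie in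
`V_A`; (ii) it is in `V_B`. Consequently `V_A` is upward-closed and `V_B` is
downward-closed under the ancestry relation of `G` restricted to entities. -/
theorem comp_partition_up_down_closed {α : Type} [DecidableEq α]
    (A B : PlaceGraph α) (hWA : A.WF) (hWB : B.WF)
    (hIface : B.n = A.m) (hdisj : Disjoint A.V B.V) :
    ((A.comp B).V = A.V ∪ B.V ∧ Disjoint A.V B.V) ∧
    (∀ v ∈ (A.comp B).V,
      Xor' (v ∈ A.V ∧ ∀ w ∈ (A.comp B).V, PlaceGraph.Anc (A.comp B) w v → w ∈ A.V)
           (v ∈ B.V)) ∧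
    (∀ v ∈ A.V, ∀ w ∈ (A.comp B).V, PlaceGraph.Anc (A.comp B) w v → w ∈ A.V) ∧
    (∀ v ∈ B.V, ∀ w ∈ (A.comp B).V, PlaceGraph.Anc (A.comp B) v w → w ∈ B.V) :=
  comp_partition_up_down_closed_general A B hWA hdisj
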